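/- arXiv:1806.05248 — 3 statements merged into one kernel-verified Lean document; each statement's English description precedes it below -/
import Mathlib

section
/- In the Cartesian square of a connected graph (X, ∼) with cost f, the landscape on Y = X × X with cost F̃((x₁,x₂)) = min{f(x₁), f(x₂)} has no strict local minimum: from every (x₁,x₂) there is an F̃-non-increasing path to (x̂, x̂), where x̂ is a global minimum of f. -/
private lemma pathJoin {α : Type*} {R : α → α → Prop} {a b c : α}
    (h1 : ∃ (k : ℕ) (p : ℕ → α), p 0 = a ∧ p k = b ∧ ∀ i < k, R (p i) (p (i + 1)))
    (h2 : ∃ (k : ℕ) (p : ℕ → α), p 0 = b ∧ p k = c ∧ ∀ i < k, R (p i) (p (i + 1))) :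
    ∃ (k : ℕ) (p : ℕ → α), p 0 = a ∧ p k = c ∧ ∀ i < k, R (p i) (p (i + 1)) := by
  obtain ⟨k1, p1, rfl, hb, hs1⟩ := h1
  obtain ⟨k2, p2, hb2, hc, hs2⟩ := h2
  refine ⟨k1 + k2, fun i => if i < k1 then p1 i else p2 (i - k1), ?_, ?_, ?_⟩
  · by_cases h : 0 < k1
    · simp [h]
    · have hk : k1 = 0 := by omega
      subst hk; simpa [hb2] using hb.symm
  · have h : ¬(k1 + k2 < k1) := by omega
    simp [h, hc]
  · intro i hi
    by_cases h1' : i + 1 < k1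
    · have h' : i < k1 := by omega
      simpa [h1', h'] using hs1 i h'
    · by_cases h2' : i < k1
      · have he : i + 1 = k1 := by omega
        have e : p2 (i + 1 - k1) = p1 (i + 1) := by
          have h0 : i + 1 - k1 = 0 := by omega
          rw [h0, hb2, ← hb, he]
        simp only [if_pos h2', if_neg h1', e]
        exact hs1 i h2'
      · have e1 : i - k1 < k2 := by omega
        have e2 : i + 1 - k1 = (i - k1) + 1 := by omega
        simp only [if_neg h2', if_neg h1', e2]
        exact hs2 _ e1

/-- In the Cartesian square of a connected graph `(X, ∼)` with cost `f`, the landscape on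
`X × X` with cost `F̃(x₁,x₂) = min (f x₁) (f x₂)` has no strict local minimum: from every
`(x₁,x₂)` there is an `F̃`-non-increasing path to `(x̂, x̂)`, where `x̂` is a global
minimum of `f`. -/
theorem square_encoding_no_strict_local_min {X : Type*} [Fintype X]
    (G : SimpleGraph X) (hconn : G.Connected)
    (f : X → ℝ) (xhat : X) (hmin : ∀ x, f xhat ≤ f x)
    (adjY : X × X → X × X → Prop)
    (hadjY : ∀ a b : X × X, adjY a b ↔
      (a.1 = b.1 ∧ G.Adj a.2 b.2) ∨ (a.2 = b.2 ∧ G.Adj a.1 b.1))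
    (Ft : X × X → ℝ) (hFt : ∀ a : X × X, Ft a = min (f a.1) (f a.2)) :
    ∀ a : X × X, ∃ (k : ℕ) (p : ℕ → X × X), p 0 = a ∧ p k = (xhat, xhat) ∧
      (∀ i < k, adjY (p i) (p (i + 1))) ∧
      (∀ i < k, Ft (p (i + 1)) ≤ Ft (p i)) := by
  classical
  set R : X × X → X × X → Prop := fun u v => adjY u v ∧ Ft v ≤ Ft u with hR
  set P : X × X → Prop := fun a =>
    ∃ (k : ℕ) (p : ℕ → X × X), p 0 = a ∧ p k = (xhat, xhat) ∧
      ∀ i < k, R (p i) (p (i + 1)) with hP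
  -- swapping the coordinates preserves P
  have Psymm : ∀ u v : X, P (u, v) → P (v, u) := by
    intro u v ⟨k, p, h0, hk, hs⟩
    refine ⟨k, fun i => ((p i).2, (p i).1), by simp [h0], by simp [hk], ?_⟩
    intro i hi
    obtain ⟨ha, hf⟩ := hs i hi
    constructor
    · rw [hadjY] at ha ⊢
      simp only at ha ⊢
      tauto
    · rw [hFt, hFt] at hf ⊢
      simpa [min_comm] using hf
  -- the key induction
  have key : ∀ n : ℕ, ∀ x y : X, f x ≤ f y →
      (Finset.univ.filter (fun v => f v < f x)).card < n → P (x, y) := by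
    intro n
    induction n with
    | zero => intro x y _ h; omega
    | succ n ih =>
      intro x y hxy hcard
      obtain ⟨W⟩ : G.Reachable y xhat := hconn.preconnected y xhat
      by_cases hQ : ∃ i, i ≤ W.length ∧ f (W.getVert i) < f x
      · -- there is a strictly better vertex along the walk; stop at the first one
        set j := Nat.find hQ with hj
        obtain ⟨hjle, hjlt⟩ := Nat.find_spec hQ
        have hminimal : ∀ i < j, i ≤ W.length → f x ≤ f (W.getVert i) := by
          intro i hij hile
          have := Nat.find_min hQ hij
          push_neg at this
          exact this hile
        set z := W.getVert j with hz
        -- segment from (x, y) to (x, z)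
        have seg : ∃ (k : ℕ) (p : ℕ → X × X), p 0 = (x, y) ∧ p k = (x, z) ∧
            ∀ i < k, R (p i) (p (i + 1)) := by
          refine ⟨j, fun i => (x, W.getVert i), by simp, rfl, ?_⟩
          intro i hij
          constructor
          · rw [hadjY]
            exact Or.inl ⟨rfl, W.adj_getVert_succ (by omega)⟩
          · rw [hFt, hFt]
            simp only
            have h1 : f x ≤ f (W.getVert i) := hminimal i hij (by omega)
            rw [min_eq_left h1]
            exact min_le_left _ _
        -- recurse from (z, x)
        have hsub : Finset.univ.filter (fun v => f v < f z) ⊂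
            Finset.univ.filter (fun v => f v < f x) := by
          refine (Finset.ssubset_iff_of_subset ?_).2 ⟨z, ?_, ?_⟩
          · intro v hv
            simp only [Finset.mem_filter, Finset.mem_univ, true_and] at hv ⊢
            exact hv.trans hjlt
          · simp [hjlt]
          · simp
        have hcard' : (Finset.univ.filter (fun v => f v < f z)).card < n := by
          have := Finset.card_lt_card hsub
          omega
        have hPzx : P (z, x) := ih z x (le_of_lt hjlt) hcard'
        have hPxz : P (x, z) := Psymm z x hPzx
        exact pathJoin seg hPxz
      · -- the walk never goes strictly below f x
        push_neg at hQ
        -- segment from (x, y) to (x, xhat)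
        have segA : ∃ (k : ℕ) (p : ℕ → X × X), p 0 = (x, y) ∧ p k = (x, xhat) ∧
            ∀ i < k, R (p i) (p (i + 1)) := by
          refine ⟨W.length, fun i => (x, W.getVert i), by simp, by simp, ?_⟩
          intro i hi
          constructor
          · rw [hadjY]
            exact Or.inl ⟨rfl, W.adj_getVert_succ hi⟩
          · rw [hFt, hFt]
            simp only
            have h1 : f x ≤ f (W.getVert i) := hQ i (le_of_lt hi)
            rw [min_eq_left h1]
            exact min_le_left _ _
        -- segment from (x, xhat) to (xhat, xhat)
        obtain ⟨W2⟩ : G.Reachable x xhat := hconn.preconnected x xhat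
        have segB : ∃ (k : ℕ) (p : ℕ → X × X), p 0 = (x, xhat) ∧ p k = (xhat, xhat) ∧
            ∀ i < k, R (p i) (p (i + 1)) := by
          refine ⟨W2.length, fun i => (W2.getVert i, xhat), by simp, by simp, ?_⟩
          intro i hi
          constructor
          · rw [hadjY]
            exact Or.inr ⟨rfl, W2.adj_getVert_succ hi⟩
          · rw [hFt, hFt]
            simp only
            rw [min_eq_right (hmin _), min_eq_right (hmin _)]
        exact pathJoin segA segB
  intro a
  have hPa : P a := by
    rcases le_total (f a.1) (f a.2) with h | h
    · have := key ((Finset.univ.filter (fun v => f v < f a.1)).card + 1) a.1 a.2 h (by omega)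
      simpa using this
    · have := key ((Finset.univ.filter (fun v => f v < f a.2)).card + 1) a.2 a.1 h (by omega)
      have := Psymm a.2 a.1 this
      simpa using this
  obtain ⟨k, p, h0, hk, hs⟩ := hPa
  exact ⟨k, p, h0, hk, fun i hi => (hs i hi).1, fun i hi => (hs i hi).2⟩
end

section
/- In the sparse-subgraph encoding of maximum matching, for every sparse edge set y ⊆ E with y ≠ ŷ (ŷ a fixed maximum matching of G), there is an adjacent sparse set y' (differing from y in exactly one edge) with F̃(y') ≤ F̃(y) and |y' Δ ŷ| < |y Δ ŷ|, where F̃(y) is the number of nodes left uncovered by a maximum matching of (V, y). -/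
/-- Pairwise vertex-disjointness of a set of edges. -/
def PairwiseDisjointEdges {V : Type*} (M : Finset (Sym2 V)) : Prop :=
  ∀ e ∈ M, ∀ e' ∈ M, e ≠ e' → ∀ v : V, ¬ (v ∈ e ∧ v ∈ e')

/-- An edge set is sparse if every vertex lies in at most two of its edges
(i.e. the spanning subgraph it induces has maximum degree ≤ 2). -/
def IsSparse {V : Type*} [DecidableEq V] (S : Finset (Sym2 V)) : Prop :=
  ∀ v : V, (S.filter (fun e => v ∈ e)).card ≤ 2

/-- The size of a maximum matching contained in the edge set `S`. -/
noncomputable def matchNum {V : Type*} (S : Finset (Sym2 V)) : ℕ :=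
  sSup { m : ℕ | ∃ M ⊆ S, PairwiseDisjointEdges M ∧ M.card = m }

/-- `F̃(S)` = number of vertices left uncovered by a maximum matching of `(V, S)`. -/
noncomputable def coverCost {V : Type*} [Fintype V] (S : Finset (Sym2 V)) : ℕ :=
  Fintype.card V - 2 * matchNum S

section Helpers

variable {V : Type*}

lemma pdisj_empty : PairwiseDisjointEdges (∅ : Finset (Sym2 V)) := by
  intro e he; simp at he

lemma matchSet_bddAbove (S : Finset (Sym2 V)) :
    BddAbove {m : ℕ | ∃ M ⊆ S, PairwiseDisjointEdges M ∧ M.card = m} := by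
  refine ⟨S.card, ?_⟩
  rintro m ⟨M, hMS, -, rfl⟩
  exact Finset.card_le_card hMS

lemma matchSet_nonempty (S : Finset (Sym2 V)) :
    {m : ℕ | ∃ M ⊆ S, PairwiseDisjointEdges M ∧ M.card = m}.Nonempty :=
  ⟨0, ∅, Finset.empty_subset S, pdisj_empty, Finset.card_empty⟩

lemma le_matchNum {S M : Finset (Sym2 V)} (hMS : M ⊆ S) (hM : PairwiseDisjointEdges M) :
    M.card ≤ matchNum S :=
  le_csSup (matchSet_bddAbove S) ⟨M, hMS, hM, rfl⟩

lemma matchNum_spec (S : Finset (Sym2 V)) :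
    ∃ M, M ⊆ S ∧ PairwiseDisjointEdges M ∧ M.card = matchNum S :=
  Nat.sSup_mem (matchSet_nonempty S) (matchSet_bddAbove S)

lemma coverCost_anti [Fintype V] {S T : Finset (Sym2 V)} (h : matchNum S ≤ matchNum T) :
    coverCost T ≤ coverCost S :=
  Nat.sub_le_sub_left (Nat.mul_le_mul_left 2 h) _

variable [DecidableEq V]

lemma symmDiff_erase_self {y : Finset (Sym2 V)} {f : Sym2 V} (hf : f ∈ y) :
    symmDiff y (y.erase f) = {f} := by
  ext x
  simp only [Finset.mem_symmDiff, Finset.mem_erase, Finset.mem_singleton]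
  constructor
  · rintro (⟨hx, h⟩ | ⟨⟨-, hx⟩, h⟩)
    · by_contra hne; exact h ⟨hne, hx⟩
    · exact absurd hx h
  · rintro rfl; exact Or.inl ⟨hf, fun h => h.1 rfl⟩

lemma symmDiff_insert_self {y : Finset (Sym2 V)} {e : Sym2 V} (he : e ∉ y) :
    symmDiff y (insert e y) = {e} := by
  ext x
  simp only [Finset.mem_symmDiff, Finset.mem_insert, Finset.mem_singleton]
  constructor
  · rintro (⟨hx, h⟩ | ⟨(rfl | hx), h⟩)
    · exact absurd (Or.inr hx) h
    · rfl
    · exact absurd hx h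
  · rintro rfl; exact Or.inr ⟨Or.inl rfl, he⟩

lemma symmDiff_erase_left {y z : Finset (Sym2 V)} {f : Sym2 V} (hf : f ∈ y) (hfz : f ∉ z) :
    symmDiff (y.erase f) z = (symmDiff y z).erase f := by
  ext x
  simp only [Finset.mem_symmDiff, Finset.mem_erase]
  by_cases hx : x = f
  · subst hx; tauto
  · tauto

lemma symmDiff_insert_left {y z : Finset (Sym2 V)} {e : Sym2 V} (he : e ∉ y) (hez : e ∈ z) :
    symmDiff (insert e y) z = (symmDiff y z).erase e := by
  ext x
  simp only [Finset.mem_symmDiff, Finset.mem_erase, Finset.mem_insert]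
  by_cases hx : x = e
  · subst hx; tauto
  · tauto

lemma isSparse_of_subset {y z : Finset (Sym2 V)} (h : z ⊆ y) (hy : IsSparse y) :
    IsSparse z := fun v =>
  le_trans (Finset.card_le_card (Finset.filter_subset_filter _ h)) (hy v)

end Helpers

/-- Sparse-subgraph encoding of maximum matching: for every sparse edge set `y ⊆ E` with
`y ≠ ŷ` (`ŷ` a fixed maximum matching of `G`), there is an adjacent sparse edge set `y'`
(differing from `y` in exactly one edge) with `F̃(y') ≤ F̃(y)` and `|y' Δ ŷ| < |y Δ ŷ|`. -/
theorem sparse_matching_descent {V : Type*} [Fintype V] [DecidableEq V]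
    (G : SimpleGraph V) [DecidableRel G.Adj]
    (yhat : Finset (Sym2 V)) (hyhatE : ↑yhat ⊆ G.edgeSet)
    (hyhatM : PairwiseDisjointEdges yhat)
    (hyhatMax : ∀ M : Finset (Sym2 V), ↑M ⊆ G.edgeSet → PairwiseDisjointEdges M →
      M.card ≤ yhat.card) :
    ∀ y : Finset (Sym2 V), ↑y ⊆ G.edgeSet → IsSparse y → y ≠ yhat →
      ∃ y' : Finset (Sym2 V), ↑y' ⊆ G.edgeSet ∧ IsSparse y' ∧
        (symmDiff y y').card = 1 ∧
        coverCost y' ≤ coverCost y ∧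
        (symmDiff y' yhat).card < (symmDiff y yhat).card := by
  intro y hyE hyS hyne
  by_cases hsub : yhat ⊆ y
  · -- Case A : ŷ ⊊ y ; remove any f ∈ y \ ŷ
    obtain ⟨f, hfy, hfh⟩ : ∃ f ∈ y, f ∉ yhat := by
      by_contra h
      push_neg at h
      exact hyne (Finset.Subset.antisymm h hsub)
    refine ⟨y.erase f, ?_, isSparse_of_subset (Finset.erase_subset _ _) hyS, ?_, ?_, ?_⟩
    · exact subset_trans (Finset.coe_subset.mpr (Finset.erase_subset _ _)) hyE
    · rw [symmDiff_erase_self hfy]; simp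
    · -- cost: matchNum y ≤ yhat.card ≤ matchNum (y.erase f)
      apply coverCost_anti
      have h1 : matchNum y ≤ yhat.card := by
        apply csSup_le (matchSet_nonempty y)
        rintro m ⟨M, hMy, hd, rfl⟩
        exact hyhatMax M (subset_trans (Finset.coe_subset.mpr hMy) hyE) hd
      have h2 : yhat.card ≤ matchNum (y.erase f) :=
        le_matchNum (Finset.subset_erase.mpr ⟨hsub, fun h => hfh h⟩) hyhatM
      exact le_trans h1 h2
    · rw [symmDiff_erase_left hfy hfh]
      exact Finset.card_erase_lt_of_mem (Finset.mem_symmDiff.mpr (Or.inl ⟨hfy, hfh⟩))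
  · -- Case B : ∃ e ∈ ŷ \ y
    obtain ⟨e, heh, hey⟩ : ∃ e ∈ yhat, e ∉ y := by
      by_contra h
      push_neg at h
      exact hsub h
    by_cases hS : IsSparse (insert e y)
    · -- B1 : just add e
      refine ⟨insert e y, ?_, hS, ?_, ?_, ?_⟩
      · rw [Finset.coe_insert]
        exact Set.insert_subset (hyhatE heh) hyE
      · rw [symmDiff_insert_self hey]; simp
      · exact coverCost_anti (by
          obtain ⟨M, hMy, hd, hc⟩ := matchNum_spec y
          exact hc ▸ le_matchNum (hMy.trans (Finset.subset_insert _ _)) hd)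
      · rw [symmDiff_insert_left hey heh]
        exact Finset.card_erase_lt_of_mem (Finset.mem_symmDiff.mpr (Or.inr ⟨heh, hey⟩))
    · -- B2 : some endpoint v of e has degree 2 in y
      rw [IsSparse] at hS
      push_neg at hS
      obtain ⟨v, hv3⟩ := hS
      have hve : v ∈ e := by
        by_contra hve
        rw [Finset.filter_insert, if_neg hve] at hv3
        exact absurd (hyS v) (not_le.mpr hv3)
      have hdeg : 2 ≤ (y.filter (fun g => v ∈ g)).card := by
        rw [Finset.filter_insert, if_pos hve] at hv3
        have := Finset.card_insert_le e (y.filter (fun g => v ∈ g))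
        omega
      obtain ⟨f₁, hf₁, f₂, hf₂, hne⟩ := Finset.one_lt_card.mp hdeg
      rw [Finset.mem_filter] at hf₁ hf₂
      -- both f₁ f₂ ∉ yhat
      have hnh : ∀ f, f ∈ y → v ∈ f → f ∉ yhat := by
        intro f hfy hvf hfh
        have hfe : f ≠ e := fun h => hey (h ▸ hfy)
        exact hyhatM f hfh e heh hfe v ⟨hvf, hve⟩
      obtain ⟨M, hMy, hd, hc⟩ := matchNum_spec y
      -- pick f among f₁ f₂ not in M
      have : ∃ f, f ∈ y ∧ f ∉ yhat ∧ f ∉ M := by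
        by_cases h1 : f₁ ∈ M
        · by_cases h2 : f₂ ∈ M
          · exact absurd ⟨hf₁.2, hf₂.2⟩ (hd f₁ h1 f₂ h2 hne v)
          · exact ⟨f₂, hf₂.1, hnh f₂ hf₂.1 hf₂.2, h2⟩
        · exact ⟨f₁, hf₁.1, hnh f₁ hf₁.1 hf₁.2, h1⟩
      obtain ⟨f, hfy, hfh, hfM⟩ := this
      refine ⟨y.erase f, ?_, isSparse_of_subset (Finset.erase_subset _ _) hyS, ?_, ?_, ?_⟩
      · exact subset_trans (Finset.coe_subset.mpr (Finset.erase_subset _ _)) hyE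
      · rw [symmDiff_erase_self hfy]; simp
      · exact coverCost_anti
          (hc ▸ le_matchNum (Finset.subset_erase.mpr ⟨hMy, hfM⟩) hd)
      · rw [symmDiff_erase_left hfy hfh]
        exact Finset.card_erase_lt_of_mem (Finset.mem_symmDiff.mpr (Or.inl ⟨hfy, hfh⟩))
end

section
/- In the string encoding of the maximum clique problem, a string y ∈ Vⁿ is pure (i.e., |φ(y)| = 1) if and only if the set of its entries { y_i : i ∈ [n] } is a clique of G. -/
/-- Greedy clique of a reversed string (head = last letter of the string): the letter `v`
is added if it is adjacent (or equal) to every earlier letter of the string. -/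
def greedyCliqueRev {V : Type*} [DecidableEq V] (G : SimpleGraph V) [DecidableRel G.Adj] :
    List V → Finset V
  | [] => ∅
  | v :: l =>
      if ∀ w ∈ l, w = v ∨ G.Adj w v then insert v (greedyCliqueRev G l)
      else greedyCliqueRev G l

/-- Greedy clique `γ_G(v₁,…,v_l)` of a string, processed left to right. -/
def greedyClique {V : Type*} [DecidableEq V] (G : SimpleGraph V) [DecidableRel G.Adj]
    (s : List V) : Finset V :=
  greedyCliqueRev G s.reverse

/-- `φ(y)`: the greedy cliques of suffixes of `y` that are maximal under inclusion among
all greedy cliques of suffixes of `y`. -/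
def phiString {V : Type*} [DecidableEq V] (G : SimpleGraph V) [DecidableRel G.Adj]
    (y : List V) : Set (Finset V) :=
  { C | (∃ s, s <:+ y ∧ C = greedyClique G s) ∧
        ∀ s', s' <:+ y → ¬ C ⊂ greedyClique G s' }

section Aux
variable {V : Type*} [DecidableEq V] (G : SimpleGraph V) [DecidableRel G.Adj]

lemma greedyCliqueRev_subset (l : List V) : greedyCliqueRev G l ⊆ l.toFinset := by
  induction l with
  | nil => simp [greedyCliqueRev]
  | cons v l ih =>
    rw [greedyCliqueRev]
    split
    · rw [List.toFinset_cons]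
      exact Finset.insert_subset_insert _ ih
    · rw [List.toFinset_cons]
      exact ih.trans (Finset.subset_insert _ _)

lemma isClique_greedyCliqueRev (l : List V) :
    G.IsClique (greedyCliqueRev G l : Set V) := by
  induction l with
  | nil => simp [greedyCliqueRev]
  | cons v l ih =>
    rw [greedyCliqueRev]
    split
    · rename_i h
      rw [Finset.coe_insert]
      refine ih.insert ?_
      intro b hb hbv
      have hbl : b ∈ l := List.mem_toFinset.mp (greedyCliqueRev_subset G l hb)
      rcases h b hbl with h' | h'
      · exact (hbv h'.symm).elim
      · exact h'.symm
    · exact ih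

lemma mem_greedyCliqueRev_append (l : List V) (v : V) :
    v ∈ greedyCliqueRev G (l ++ [v]) := by
  induction l with
  | nil => simp [greedyCliqueRev]
  | cons a l ih =>
    rw [List.cons_append, greedyCliqueRev]
    split
    · exact Finset.mem_insert_of_mem ih
    · exact ih

lemma greedyCliqueRev_eq_toFinset (l : List V)
    (h : ∀ a ∈ l, ∀ b ∈ l, a = b ∨ G.Adj a b) :
    greedyCliqueRev G l = l.toFinset := by
  induction l with
  | nil => simp [greedyCliqueRev]
  | cons v l ih =>
    rw [greedyCliqueRev, if_pos, List.toFinset_cons,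
      ih (fun a ha b hb => h a (List.mem_cons_of_mem _ ha) b (List.mem_cons_of_mem _ hb))]
    intro w hw
    exact h w (List.mem_cons_of_mem _ hw) v List.mem_cons_self

omit [DecidableEq V] in
lemma exists_maximal_mem [Fintype V] (T : Set (Finset V)) {x : Finset V} (hx : x ∈ T) :
    ∃ C ∈ T, x ⊆ C ∧ ∀ D ∈ T, ¬ C ⊂ D := by
  obtain ⟨C, hC, hmax⟩ := Set.Finite.exists_maximalFor id {D ∈ T | x ⊆ D}
    (Set.toFinite _) ⟨x, hx, Finset.Subset.refl x⟩
  refine ⟨C, hC.1, hC.2, fun D hD hCD => ?_⟩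
  exact hCD.not_subset (hmax ⟨hD, hC.2.trans hCD.subset⟩ hCD.subset)

end Aux


/-- String encoding of the maximum clique problem: a string `y ∈ Vⁿ` is pure
(`|φ(y)| = 1`) iff the set of its entries is a clique of `G`. -/
theorem string_encoding_pure_iff_clique {V : Type*} [Fintype V] [DecidableEq V]
    (G : SimpleGraph V) [DecidableRel G.Adj]
    (y : List V) (hlen : y.length = Fintype.card V) :
    Set.ncard (phiString G y) = 1 ↔ G.IsClique { v | v ∈ y } := by
  constructor
  · intro h
    by_contra hnc
    rw [SimpleGraph.isClique_iff, Set.Pairwise] at hnc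
    push_neg at hnc
    obtain ⟨u, hu, w, hw, hne, hadj⟩ := hnc
    simp only [Set.mem_setOf_eq] at hu hw
    -- build suffixes whose greedy cliques contain u resp. w
    have key : ∀ v ∈ y, ∃ C ∈ phiString G y, v ∈ C := by
      intro v hv
      obtain ⟨p, t, rfl⟩ := List.append_of_mem hv
      have hsuf : (v :: t) <:+ p ++ v :: t := ⟨p, rfl⟩
      have hvmem : v ∈ greedyClique G (v :: t) := by
        rw [greedyClique, List.reverse_cons]
        exact mem_greedyCliqueRev_append G _ v
      obtain ⟨C, ⟨s, hs, rfl⟩, hsub, hmax⟩ :=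
        exists_maximal_mem {D | ∃ s, s <:+ p ++ v :: t ∧ D = greedyClique G s}
          (x := greedyClique G (v :: t)) ⟨v :: t, hsuf, rfl⟩
      exact ⟨greedyClique G s, ⟨⟨s, hs, rfl⟩,
        fun s' hs' hsub' => hmax _ ⟨s', hs', rfl⟩ hsub'⟩, hsub hvmem⟩
    obtain ⟨C₁, hC₁, huC⟩ := key u hu
    obtain ⟨C₂, hC₂, hwC⟩ := key w hw
    have hCC : C₁ = C₂ := by
      obtain ⟨a, ha⟩ := Set.ncard_eq_one.mp h
      rw [ha, Set.mem_singleton_iff] at hC₁ hC₂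
      rw [hC₁, hC₂]
    obtain ⟨⟨s, hs, hCeq⟩, -⟩ := hC₁
    rw [hCeq] at huC
    rw [← hCC, hCeq] at hwC
    exact hadj (isClique_greedyCliqueRev G s.reverse
      (Finset.mem_coe.mpr huC) (Finset.mem_coe.mpr hwC) hne)
  · intro hc
    have key : ∀ s, s <:+ y → greedyClique G s = s.toFinset := by
      intro s hs
      rw [greedyClique, greedyCliqueRev_eq_toFinset, List.toFinset_reverse]
      intro a ha b hb
      rw [List.mem_reverse] at ha hb
      by_cases hab : a = b
      · exact Or.inl hab
      · exact Or.inr (hc (hs.subset ha) (hs.subset hb) hab)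
    have hphi : phiString G y = {y.toFinset} := by
      ext C
      simp only [Set.mem_singleton_iff]
      constructor
      · rintro ⟨⟨s, hs, rfl⟩, hmax⟩
        rw [key s hs]
        by_contra hne
        refine hmax y (List.suffix_refl y) ?_
        rw [key s hs, key y (List.suffix_refl y)]
        exact Finset.ssubset_iff_subset_ne.mpr
          ⟨fun x hx => List.mem_toFinset.mpr (hs.subset (List.mem_toFinset.mp hx)), hne⟩
      · rintro rfl
        refine ⟨⟨y, List.suffix_refl y, (key y (List.suffix_refl y)).symm⟩, ?_⟩
        intro s' hs' hsub
        rw [key s' hs'] at hsub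
        exact hsub.not_subset (fun x hx => List.mem_toFinset.mpr (hs'.subset (List.mem_toFinset.mp hx)))
    rw [hphi, Set.ncard_singleton]
end
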